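/- Let κ > 0, 0 < θ ≤ 1/2, and 1 < u < 1/(1−θ). Then ρ_{θ,κ}(u) = κ·(1 − (1−θ)u)·u^{κ−1}. -/

import Mathlib

open MeasureTheory

/-- The region `V_k(u,v)`. -/
def Vk (k : ℕ) (u v : ℝ) : Set (Fin k → ℝ) :=
  {t | (∀ i, t i ∈ Set.Ioo (0:ℝ) 1) ∧
    (∑ i ∈ Finset.univ.filter (fun i : Fin k => (i : ℕ) < k - 1), t i) < u - 1 ∧
    u - 1 < ∑ i, t i ∧ ∑ i, t i < u - v}

/-- The function `μ_k(u,v)`. -/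
noncomputable def muk (k : ℕ) (u v : ℝ) : ℝ :=
  if k = 1 then
    u⁻¹ * (volume (Set.Ioo (0:ℝ) 1 ∩ Set.Ioo (u-1) (u-v))).toReal
  else
    u⁻¹ * ∫ t in Vk k u v,
      ∏ j ∈ Finset.univ.filter (fun j : Fin k => (j : ℕ) < k - 1),
        (u - ∑ i ∈ Finset.univ.filter (fun i : Fin k => i ≤ j), t i)⁻¹

/-- `μ^{(κ)}(u,v) = ∑_{k ≥ 1} κ^k μ_k(u,v)`. -/
noncomputable def mukappa (κ u v : ℝ) : ℝ := ∑' k : ℕ, κ ^ (k+1) * muk (k+1) u v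

/-- `ρ_{θ,κ}(u) = μ^{(κ)}(u, (1-θ)u)`. -/
noncomputable def rhotheta (θ κ u : ℝ) : ℝ := mukappa κ u ((1-θ)*u)

/-!
Fix `1 < u`, `u - v ≤ 1` and `v ≤ 1`. A point of `V_{k+1}(u,v)` is a point `t` of the simplex
`S_k = {t_i > 0, ∑ t_i < u - 1}` followed by a last coordinate ranging over an interval of
length `1 - v`; the box constraints `t_i < 1` are then automatic. Integrating out the last
coordinate gives `(1 - v) ∫_{S_k} f_k(u; t) dt`. Peeling off the first coordinate turns
`f_k(u; ·)` into `(u - t_1)⁻¹ f_{k-1}(u - t_1; ·)`, so by induction the simplex integral is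
`(log u)^k / k!`. Hence `μ_{k+1}(u,v) = (1 - v) (log u)^k / (u k!)`, and the exponential series
gives `μ^{(κ)}(u,v) = κ (1 - v) u^{κ-1}`. For `θ ≤ 1/2` and `1 < u < 1/(1-θ)`, the point
`v = (1 - θ) u` satisfies `u - v = θ u ≤ v < 1`.
-/

open Real
open scoped Nat

theorem integral_eq_integral_integral_insertNth {E : Type*} [NormedAddCommGroup E]
    [NormedSpace ℝ E] {m : ℕ} (i : Fin (m + 1)) {f : (Fin (m + 1) → ℝ) → E}
    (hf : Integrable f) : ∫ t, f t = ∫ a, ∫ t', f (i.insertNth a t') := by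
  have he := (volume_preserving_piFinSuccAbove (fun _ : Fin (m + 1) => ℝ) i).symm
  rw [← he.integral_comp']
  exact integral_prod _ ((he.integrable_comp_emb (MeasurableEquiv.measurableEmbedding _)).2 hf)

theorem integral_eq_integral_integral_insertNth_swap {E : Type*} [NormedAddCommGroup E]
    [NormedSpace ℝ E] {m : ℕ} (i : Fin (m + 1)) {f : (Fin (m + 1) → ℝ) → E}
    (hf : Integrable f) : ∫ t, f t = ∫ t', ∫ a, f (i.insertNth a t') := by
  have he := (volume_preserving_piFinSuccAbove (fun _ : Fin (m + 1) => ℝ) i).symm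
  rw [← he.integral_comp']
  exact integral_prod_symm _
    ((he.integrable_comp_emb (MeasurableEquiv.measurableEmbedding _)).2 hf)

def openSimplex (m : ℕ) (x : ℝ) : Set (Fin m → ℝ) :=
  {t | (∀ i, 0 < t i) ∧ ∑ i, t i < x}

theorem measurableSet_openSimplex (m : ℕ) (x : ℝ) : MeasurableSet (openSimplex m x) := by
  unfold openSimplex; measurability

theorem openSimplex_subset_pi (m : ℕ) (x : ℝ) :
    openSimplex m x ⊆ Set.univ.pi fun _ => Set.Ioo 0 x := fun _ ht i _ =>
  ⟨ht.1 i, (Finset.single_le_sum (fun j _ => (ht.1 j).le) (Finset.mem_univ i)).trans_lt ht.2⟩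

theorem volume_openSimplex_lt_top (m : ℕ) (x : ℝ) : volume (openSimplex m x) < ⊤ :=
  (measure_mono (openSimplex_subset_pi m x)).trans_lt (by simp [volume_pi_pi])

theorem openSimplex_eq_empty {m : ℕ} {x : ℝ} (hx : x ≤ 0) : openSimplex m x = ∅ :=
  Set.eq_empty_of_forall_notMem fun _ ht =>
    (Finset.sum_nonneg fun i _ => (ht.1 i).le).not_gt (ht.2.trans_le hx)

theorem cons_mem_openSimplex_iff {m : ℕ} {x a : ℝ} {t : Fin m → ℝ} :
    Fin.cons a t ∈ openSimplex (m + 1) x ↔ 0 < a ∧ t ∈ openSimplex m (x - a) := by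
  simp only [openSimplex, Set.mem_ofPred_eq, Fin.forall_fin_succ, Fin.sum_univ_succ,
    Fin.cons_zero, Fin.cons_succ, lt_sub_iff_add_lt', and_assoc]

/-- The paper's `f_m(u; t)`. -/
noncomputable def invPartialSumProd (m : ℕ) (u : ℝ) (t : Fin m → ℝ) : ℝ :=
  ∏ j : Fin m, (u - ∑ i ∈ Finset.univ.filter (· ≤ j), t i)⁻¹

theorem invPartialSumProd_cons {m : ℕ} (u a : ℝ) (t : Fin m → ℝ) :
    invPartialSumProd (m + 1) u (Fin.cons a t) = (u - a)⁻¹ * invPartialSumProd m (u - a) t := by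
  simp only [invPartialSumProd, Fin.prod_univ_succ, Finset.sum_filter, Fin.sum_univ_succ,
    Fin.cons_zero, Fin.cons_succ, Fin.succ_le_succ_iff, Fin.zero_le, if_true, Fin.le_zero_iff,
    Fin.succ_ne_zero, if_false, Finset.sum_const_zero, sub_zero, sub_add_eq_sub_sub]

theorem measurable_invPartialSumProd (m : ℕ) (u : ℝ) : Measurable (invPartialSumProd m u) := by
  unfold invPartialSumProd; fun_prop

theorem norm_invPartialSumProd_le_one {m : ℕ} {u : ℝ} {t : Fin m → ℝ}
    (ht : t ∈ openSimplex m (u - 1)) : ‖invPartialSumProd m u t‖ ≤ 1 := by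
  rw [Real.norm_eq_abs, invPartialSumProd, Finset.abs_prod]
  refine Finset.prod_le_one (fun _ _ => abs_nonneg _) fun j _ => ?_
  have hle : ∑ i ∈ Finset.univ.filter (· ≤ j), t i ≤ ∑ i, t i :=
    Finset.sum_le_sum_of_subset_of_nonneg (Finset.filter_subset _ _) fun i _ _ => (ht.1 i).le
  rw [abs_inv]
  exact inv_le_one_of_one_le₀ ((by linarith [ht.2] : (1 : ℝ) ≤ _).trans (le_abs_self _))

theorem integrableOn_invPartialSumProd (m : ℕ) (u : ℝ) :
    IntegrableOn (invPartialSumProd m u) (openSimplex m (u - 1)) :=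
  Measure.integrableOn_of_bounded (volume_openSimplex_lt_top m _).ne
    (measurable_invPartialSumProd m u).aestronglyMeasurable
    ((ae_restrict_mem (measurableSet_openSimplex m _)).mono
      fun _ => norm_invPartialSumProd_le_one)

theorem integral_inv_mul_log_pow_div_factorial (m : ℕ) {u : ℝ} (hu : 0 < u) :
    ∫ y in (1 : ℝ)..u, y⁻¹ * (log y ^ m / m !) = log u ^ (m + 1) / (m + 1)! := by
  have hpos : ∀ y ∈ Set.uIcc 1 u, 0 < y := fun _ hy => (lt_min one_pos hu).trans_le hy.1
  rw [intervalIntegral.integral_eq_sub_of_hasDerivAt (f := fun y => log y ^ (m + 1) / (m + 1)!)]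
  · simp
  · intro y hy
    refine (((hasDerivAt_log (hpos y hy).ne').pow (m + 1)).div_const
      ((m + 1)! : ℝ)).congr_deriv ?_
    rw [Nat.factorial_succ]; push_cast; field_simp
  · exact ((continuousOn_inv₀.mono fun y hy => (hpos y hy).ne').mul
      (((continuousOn_log.mono fun y hy => (hpos y hy).ne').pow m).div_const _)
      ).intervalIntegrable

theorem integral_indicator_openSimplex_cons (m : ℕ) (x u a : ℝ) :
    ∫ t, (openSimplex (m + 1) x).indicator (invPartialSumProd (m + 1) u) (Fin.cons a t) =
      (Set.Ioi 0).indicator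
        (fun a => (u - a)⁻¹ * ∫ t in openSimplex m (x - a), invPartialSumProd m (u - a) t)
        a := by
  by_cases ha : 0 < a
  · rw [Set.indicator_of_mem (Set.mem_Ioi.2 ha),
      ← integral_indicator (measurableSet_openSimplex m _), ← integral_const_mul]
    congr 1 with t
    by_cases ht : t ∈ openSimplex m (x - a)
    · rw [Set.indicator_of_mem (cons_mem_openSimplex_iff.2 ⟨ha, ht⟩), Set.indicator_of_mem ht,
        invPartialSumProd_cons]
    · rw [Set.indicator_of_notMem fun h => ht (cons_mem_openSimplex_iff.1 h).2,
        Set.indicator_of_notMem ht, mul_zero]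
  · simp [cons_mem_openSimplex_iff, ha]

theorem setIntegral_invPartialSumProd_openSimplex (m : ℕ) {u : ℝ} (hu : 1 < u) :
    ∫ t in openSimplex m (u - 1), invPartialSumProd m u t = log u ^ m / m ! := by
  induction m generalizing u with
  | zero =>
    have huniv : openSimplex 0 (u - 1) = Set.univ := by
      ext t; simp [openSimplex, hu]
    simp [huniv, invPartialSumProd, measureReal_def, volume_pi]
  | succ m ih =>
    have inner (a : ℝ) :
        ∫ t, (openSimplex (m + 1) (u - 1)).indicator (invPartialSumProd (m + 1) u)
            (Fin.cons a t) =
          (Set.Ioo 0 (u - 1)).indicator (fun a => (u - a)⁻¹ * (log (u - a) ^ m / m !)) a := by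
      rw [integral_indicator_openSimplex_cons]
      by_cases ha : a < u - 1
      · simp only [Set.indicator_apply, Set.mem_Ioi, Set.mem_Ioo, ha, and_true,
          sub_right_comm u 1 a, ih (by linarith : 1 < u - a)]
      · rw [Set.indicator_of_notMem fun h : a ∈ Set.Ioo 0 (u - 1) => ha h.2]
        refine Set.indicator_apply_eq_zero.2 fun _ => ?_
        simp [openSimplex_eq_empty (by linarith : u - 1 - a ≤ 0)]
    rw [← integral_indicator (measurableSet_openSimplex _ _),
      integral_eq_integral_integral_insertNth 0 ((integrable_indicator_iff
        (measurableSet_openSimplex _ _)).2 (integrableOn_invPartialSumProd _ _))]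
    simp_rw [Fin.insertNth_zero', inner]
    rw [integral_indicator measurableSet_Ioo, ← integral_Ioc_eq_integral_Ioo,
      ← intervalIntegral.integral_of_le (by linarith),
      intervalIntegral.integral_comp_sub_left (fun y => y⁻¹ * (log y ^ m / m !)) u]
    simpa using integral_inv_mul_log_pow_div_factorial m (by linarith)

theorem measurableSet_Vk (k : ℕ) (u v : ℝ) : MeasurableSet (Vk k u v) := by
  unfold Vk; measurability

noncomputable def mukIntegrand (k : ℕ) (u : ℝ) (t : Fin k → ℝ) : ℝ :=
  ∏ j ∈ Finset.univ.filter (fun j : Fin k => (j : ℕ) < k - 1),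
    (u - ∑ i ∈ Finset.univ.filter (fun i : Fin k => i ≤ j), t i)⁻¹

theorem mukIntegrand_snoc {k : ℕ} (u : ℝ) (t : Fin k → ℝ) (a : ℝ) :
    mukIntegrand (k + 1) u (Fin.snoc t a) = invPartialSumProd k u t := by
  rw [mukIntegrand, Finset.prod_filter, Fin.prod_univ_castSucc]
  simp [invPartialSumProd, Finset.sum_filter, Fin.sum_univ_castSucc,
    Fin.castSucc_le_castSucc_iff, (Fin.castSucc_lt_last _).not_ge]

theorem snoc_mem_Vk_iff {k : ℕ} {u v a : ℝ} {t : Fin k → ℝ} (huv : u - v ≤ 1) :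
    Fin.snoc t a ∈ Vk (k + 1) u v ↔
      t ∈ openSimplex k (u - 1) ∧ a ∈ Set.Ioo (u - 1 - ∑ i, t i) (u - v - ∑ i, t i) := by
  simp only [Vk, openSimplex, Set.mem_ofPred_eq, Set.mem_Ioo, Fin.forall_fin_succ',
    Fin.snoc_castSucc, Fin.snoc_last, Finset.sum_filter, Fin.sum_univ_castSucc, Fin.val_castSucc,
    Fin.is_lt, if_true, Fin.val_last, add_tsub_cancel_right, lt_irrefl, if_false, add_zero]
  constructor
  · rintro ⟨⟨ht, -⟩, hlt, h1, h2⟩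
    exact ⟨⟨fun i => (ht i).1, hlt⟩, by linarith, by linarith⟩
  · rintro ⟨⟨ht, hlt⟩, h1, h2⟩
    have hle (i : Fin k) : t i ≤ ∑ j, t j :=
      Finset.single_le_sum (fun j _ => (ht j).le) (Finset.mem_univ i)
    have hnonneg : 0 ≤ ∑ j, t j := Finset.sum_nonneg fun j _ => (ht j).le
    exact ⟨⟨fun i => ⟨ht i, by linarith [hle i]⟩, by linarith, by linarith⟩,
      hlt, by linarith, by linarith⟩

theorem Vk_subset_pi (k : ℕ) (u v : ℝ) : Vk k u v ⊆ Set.univ.pi fun _ => Set.Ioo 0 1 :=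
  fun _ ht i _ => ht.1 i

theorem volume_Vk_lt_top (k : ℕ) (u v : ℝ) : volume (Vk k u v) < ⊤ :=
  (measure_mono (Vk_subset_pi k u v)).trans_lt (by simp [volume_pi_pi])

theorem integrableOn_mukIntegrand_Vk (k : ℕ) {u v : ℝ} (huv : u - v ≤ 1) :
    IntegrableOn (mukIntegrand (k + 1) u) (Vk (k + 1) u v) := by
  refine Measure.integrableOn_of_bounded (M := 1) (volume_Vk_lt_top _ _ _).ne
    (by unfold mukIntegrand; fun_prop : Measurable _).aestronglyMeasurable
    ((ae_restrict_mem (measurableSet_Vk _ _ _)).mono fun t ht => ?_)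
  rw [← Fin.snoc_init_self t, snoc_mem_Vk_iff huv] at ht
  rw [← Fin.snoc_init_self t, mukIntegrand_snoc]
  exact norm_invPartialSumProd_le_one ht.1

theorem integral_indicator_Vk_snoc (k : ℕ) {u v : ℝ} (huv : u - v ≤ 1) (hv : v ≤ 1)
    (t : Fin k → ℝ) :
    ∫ a, (Vk (k + 1) u v).indicator (mukIntegrand (k + 1) u) (Fin.snoc t a) =
      (openSimplex k (u - 1)).indicator (fun t => (1 - v) * invPartialSumProd k u t) t := by
  by_cases ht : t ∈ openSimplex k (u - 1)
  · have hslice :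
        (fun a => (Vk (k + 1) u v).indicator (mukIntegrand (k + 1) u) (Fin.snoc t a)) =
          (Set.Ioo (u - 1 - ∑ i, t i) (u - v - ∑ i, t i)).indicator
            fun _ => invPartialSumProd k u t := by
      ext a
      by_cases ha : a ∈ Set.Ioo (u - 1 - ∑ i, t i) (u - v - ∑ i, t i)
      · rw [Set.indicator_of_mem ((snoc_mem_Vk_iff huv).2 ⟨ht, ha⟩), Set.indicator_of_mem ha,
          mukIntegrand_snoc]
      · rw [Set.indicator_of_notMem fun h => ha ((snoc_mem_Vk_iff huv).1 h).2,
          Set.indicator_of_notMem ha]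
    rw [hslice, integral_indicator_const _ measurableSet_Ioo, Set.indicator_of_mem ht,
      volume_real_Ioo_of_le (by linarith), smul_eq_mul]
    ring_nf
  · rw [Set.indicator_of_notMem ht]
    exact integral_eq_zero_of_ae (.of_forall fun a =>
      Set.indicator_of_notMem (fun h => ht ((snoc_mem_Vk_iff huv).1 h).1) _)

theorem setIntegral_mukIntegrand_Vk (k : ℕ) {u v : ℝ} (hu : 1 < u) (huv : u - v ≤ 1)
    (hv : v ≤ 1) :
    ∫ t in Vk (k + 1) u v, mukIntegrand (k + 1) u t = (1 - v) * (log u ^ k / k !) := by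
  rw [← integral_indicator (measurableSet_Vk _ _ _),
    integral_eq_integral_integral_insertNth_swap (Fin.last k) ((integrable_indicator_iff
      (measurableSet_Vk _ _ _)).2 (integrableOn_mukIntegrand_Vk k huv))]
  simp_rw [Fin.insertNth_last', integral_indicator_Vk_snoc k huv hv]
  rw [integral_indicator (measurableSet_openSimplex _ _), integral_const_mul,
    setIntegral_invPartialSumProd_openSimplex k hu]

theorem muk_succ_eq (k : ℕ) {u v : ℝ} (hu : 1 < u) (huv : u - v ≤ 1) (hv : v ≤ 1) :
    muk (k + 1) u v = u⁻¹ * (1 - v) * (log u ^ k / k !) := by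
  rcases k with _ | k
  · rw [muk, if_pos rfl, Set.Ioo_inter_Ioo, max_eq_right (by linarith),
      min_eq_right (by linarith), Real.volume_Ioo, ENNReal.toReal_ofReal (by linarith)]
    simp
  · rw [muk, if_neg (by omega), mul_assoc]
    exact congrArg _ (setIntegral_mukIntegrand_Vk (k + 1) hu huv hv)

theorem mukappa_eq_mul_rpow {κ u v : ℝ} (hu : 1 < u) (huv : u - v ≤ 1) (hv : v ≤ 1) :
    mukappa κ u v = κ * (1 - v) * u ^ (κ - 1) := by
  have hterm (k : ℕ) :
      κ ^ (k + 1) * muk (k + 1) u v = κ * u⁻¹ * (1 - v) * ((κ * log u) ^ k / k !) := by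
    rw [muk_succ_eq k hu huv hv, mul_pow, pow_succ]
    ring
  have hexp : ∑' k : ℕ, (κ * log u) ^ k / k ! = u ^ κ := by
    rw [Real.rpow_def_of_pos (by linarith), mul_comm, Real.exp_eq_exp_ℝ,
      (NormedSpace.expSeries_div_hasSum_exp _).tsum_eq]
  rw [mukappa, tsum_congr hterm, tsum_mul_left, hexp, Real.rpow_sub_one (by positivity)]
  ring

theorem rhotheta_value_theta_le_half_general (κ θ u : ℝ)
    (hθ : θ ≤ 1/2) (hu1 : 1 < u) (hu2 : u < 1 / (1 - θ)) :
    rhotheta θ κ u = κ * (1 - (1 - θ) * u) * u ^ (κ - 1) := by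
  have hθ1 : 0 < 1 - θ := by linarith
  have hv : (1 - θ) * u < 1 := by rwa [lt_div_iff₀ hθ1, mul_comm] at hu2
  have hθu : θ * u ≤ (1 - θ) * u := mul_le_mul_of_nonneg_right (by linarith) (by linarith)
  exact mukappa_eq_mul_rpow hu1 (by linarith) hv.le

/-- Explicit value of `ρ_{θ,κ}` for `0 < θ ≤ 1/2` (Corollaire 3.5, (3.10)). -/
theorem rhotheta_value_theta_le_half (κ θ u : ℝ) (hκ : 0 < κ)
    (hθ0 : 0 < θ) (hθ : θ ≤ 1/2) (hu1 : 1 < u) (hu2 : u < 1 / (1 - θ)) :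
    rhotheta θ κ u = κ * (1 - (1 - θ) * u) * u ^ (κ - 1) :=
  rhotheta_value_theta_le_half_general κ θ u hθ hu1 hu2
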